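/- Let (X, μ) be a probability space such that every atom x₀ of μ satisfies μ({x₀}) ≤ μ(X \ {x₀}). Then there exists a measurable function u : X → ℂ with |u| = 1 a.e. and ∫ u dμ = 0. -/

import Mathlib

/-!
Transport `μ` to a probability measure `ν` on `ℝ` along a measurable embedding and cut `ℝ` at a
median `t` of `ν`. The three pieces `(-∞, t)`, `{t}`, `(t, ∞)` have masses `a, b, c` that sum
to `1` and are each at most `1/2` (the middle one by the hypothesis on atoms), so they satisfy
the triangle inequalities: there are unit complex numbers `z₁, z₂, z₃` with
`a z₁ + b z₂ + c z₃ = 0`, and the step function taking these values has integral zero.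
-/

open MeasureTheory ProbabilityTheory Set Filter Topology

theorem exists_norm_eq_one_smul_add_smul_add_smul_eq_zero {a b c : ℝ}
    (hab : |a - b| ≤ c) (hc : c ≤ a + b) :
    ∃ z₁ z₂ z₃ : ℂ, ‖z₁‖ = 1 ∧ ‖z₂‖ = 1 ∧ ‖z₃‖ = 1 ∧ a • z₁ + b • z₂ + c • z₃ = 0 := by
  -- Rotating `z₁` from `1` to `-1` moves `‖a z₁ + b‖` from `|a + b|` down to `|a - b|`.
  obtain ⟨θ, -, hθ⟩ : ∃ θ ∈ Icc 0 Real.pi,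
      ‖(a : ℂ) * Complex.exp (θ * Complex.I) + b‖ = c := by
    refine intermediate_value_Icc' Real.pi_nonneg (by fun_prop) ⟨?_, ?_⟩
    · rw [abs_sub_comm] at hab
      simpa [Complex.exp_pi_mul_I, ← Complex.ofReal_neg, ← Complex.ofReal_add, neg_add_eq_sub,
        ← Complex.ofReal_sub] using hab
    · simpa [← Complex.ofReal_add] using hc.trans (le_abs_self _)
  set w := (a : ℂ) * Complex.exp (θ * Complex.I) + b
  refine ⟨Complex.exp (θ * Complex.I), 1, Complex.exp ((-w).arg * Complex.I),
    Complex.norm_exp_ofReal_mul_I θ, norm_one, Complex.norm_exp_ofReal_mul_I _, ?_⟩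
  have hw : c • Complex.exp ((-w).arg * Complex.I) = -w := by
    rw [← hθ, ← norm_neg w, Complex.real_smul, Complex.norm_mul_exp_arg_mul_I]
  rw [hw, Complex.real_smul, Complex.real_smul]
  ring

theorem exists_measureReal_Iio_le_half_and_measureReal_Ioi_le_half
    (ν : Measure ℝ) [IsProbabilityMeasure ν] :
    ∃ t, ν.real (Iio t) ≤ 1 / 2 ∧ ν.real (Ioi t) ≤ 1 / 2 := by
  set S : Set ℝ := {x | 1 / 2 ≤ cdf ν x}
  have hS : S.Nonempty :=
    ((tendsto_cdf_atTop ν).eventually (eventually_ge_nhds (by norm_num : (1 / 2 : ℝ) < 1))).exists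
  have hS_bdd : BddBelow S := by
    obtain ⟨b, hb⟩ := ((tendsto_cdf_atBot ν).eventually
      (eventually_lt_nhds (by norm_num : (0 : ℝ) < 1 / 2))).exists_forall_of_atBot
    exact ⟨b, fun x hx => le_of_not_gt fun hxb => (hb x hxb.le).not_ge hx⟩
  set t := sInf S
  have h_lt : ∀ x < t, cdf ν x < 1 / 2 := fun x hx => by
    simpa [S] using notMem_of_lt_csInf hx hS_bdd
  have h_ge : 1 / 2 ≤ cdf ν t := by
    refine ge_of_tendsto (((cdf ν).right_continuous t).mono Ioi_subset_Ici_self) ?_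
    filter_upwards [self_mem_nhdsWithin] with x hx
    obtain ⟨s, hs, hsx⟩ := exists_lt_of_csInf_lt hS hx
    exact hs.trans (monotone_cdf ν hsx.le)
  refine ⟨t, ?_, ?_⟩
  · obtain ⟨u, hu_mono, hu_lt, hu_lim⟩ := exists_seq_strictMono_tendsto t
    have h_lim := tendsto_measure_iUnion_atTop (μ := ν)
      (fun m n hmn => Iic_subset_Iic.2 (hu_mono.monotone hmn))
    rw [iUnion_Iic_eq_Iio_of_lt_of_tendsto hu_lt hu_lim] at h_lim
    refine le_of_tendsto' ((ENNReal.tendsto_toReal (measure_ne_top ν _)).comp h_lim) fun n => ?_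
    exact (cdf_eq_real ν (u n) ▸ h_lt _ (hu_lt n)).le
  · rw [← compl_Iic, probReal_compl_eq_one_sub measurableSet_Iic, ← cdf_eq_real]
    linarith

theorem exists_measurable_norm_eq_one_integral_eq_zero_of_measureReal_singleton_le_half
    (ν : Measure ℝ) [IsProbabilityMeasure ν] (hν : ∀ t, ν.real {t} ≤ 1 / 2) :
    ∃ g : ℝ → ℂ, Measurable g ∧ (∀ x, ‖g x‖ = 1) ∧ ∫ x, g x ∂ν = 0 := by
  obtain ⟨t, h_lt, h_gt⟩ := exists_measureReal_Iio_le_half_and_measureReal_Ioi_le_half ν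
  have h_sum : ν.real (Iio t) + ν.real {t} + ν.real (Ioi t) = 1 := by
    rw [← measureReal_union (disjoint_singleton_right.2 self_notMem_Iio)
      (measurableSet_singleton t), Iio_union_right, ← compl_Iic,
      measureReal_add_measureReal_compl measurableSet_Iic, probReal_univ]
  obtain ⟨z₁, z₂, z₃, hz₁, hz₂, hz₃, hz⟩ :=
    exists_norm_eq_one_smul_add_smul_add_smul_eq_zero (a := ν.real (Iio t)) (b := ν.real {t})
      (c := ν.real (Ioi t)) (abs_le.2 ⟨by linarith [hν t], by linarith⟩) (by linarith)
  refine ⟨(Iio t).indicator (fun _ => z₁) + ({t} : Set ℝ).indicator (fun _ => z₂)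
    + (Ioi t).indicator (fun _ => z₃), ?_, fun x => ?_, ?_⟩
  · exact ((measurable_const.indicator measurableSet_Iio).add
      (measurable_const.indicator (measurableSet_singleton t))).add
      (measurable_const.indicator measurableSet_Ioi)
  · rcases lt_trichotomy x t with h | rfl | h
    · simp [h, h.ne, h.not_gt, hz₁]
    · simp [hz₂]
    · simp [h, h.ne', h.not_gt, hz₃]
  · have hi {s : Set ℝ} (hs : MeasurableSet s) (z : ℂ) :
        Integrable (s.indicator fun _ => z) ν :=
      (integrable_const z).indicator hs
    rw [integral_add' ((hi measurableSet_Iio z₁).add (hi (measurableSet_singleton t) z₂))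
        (hi measurableSet_Ioi z₃),
      integral_add' (hi measurableSet_Iio z₁) (hi (measurableSet_singleton t) z₂),
      integral_indicator_const _ measurableSet_Iio,
      integral_indicator_const _ (measurableSet_singleton t),
      integral_indicator_const _ measurableSet_Ioi, hz]

theorem measureReal_le_half_of_le_compl {X : Type*} [MeasurableSpace X] {μ : Measure X}
    [IsProbabilityMeasure μ] {s : Set X} (hs : MeasurableSet s) (h : μ s ≤ μ sᶜ) :
    μ.real s ≤ 1 / 2 := by
  have h_real : μ.real s ≤ μ.real sᶜ := ENNReal.toReal_mono (measure_ne_top μ _) h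
  linarith [probReal_add_probReal_compl (μ := μ) hs]

/-- On a probability space in which no atom has measure exceeding that of its
complement, there exists a unimodular measurable function with zero integral. -/
theorem stmt_7 {X : Type*} [MeasurableSpace X] [StandardBorelSpace X]
    (μ : Measure X) [IsProbabilityMeasure μ]
    (hatoms : ∀ x₀ : X, μ {x₀} ≤ μ ({x₀}ᶜ)) :
    ∃ u : X → ℂ, Measurable u ∧ (∀ᵐ x ∂μ, ‖u x‖ = 1) ∧ ∫ x, u x ∂μ = 0 := by
  obtain ⟨f, hf⟩ := exists_measurableEmbedding_real X
  have : IsProbabilityMeasure (μ.map f) :=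
    Measure.isProbabilityMeasure_map hf.measurable.aemeasurable
  have h_atoms : ∀ t, (μ.map f).real {t} ≤ 1 / 2 := by
    intro t
    rw [map_measureReal_apply hf.measurable (measurableSet_singleton t)]
    rcases ((subsingleton_singleton (a := t)).preimage hf.injective).eq_empty_or_singleton
      with h | ⟨x₀, h⟩
    · simp [h]
    · exact h ▸ measureReal_le_half_of_le_compl (measurableSet_singleton x₀) (hatoms x₀)
  obtain ⟨g, hg, hg_norm, hg_int⟩ :=
    exists_measurable_norm_eq_one_integral_eq_zero_of_measureReal_singleton_le_half _ h_atoms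
  exact ⟨g ∘ f, hg.comp hf.measurable, Eventually.of_forall fun x => hg_norm (f x),
    (hf.integral_map g).symm.trans hg_int⟩
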